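/- arXiv:2011.13212 — 2 statements merged into one kernel-verified Lean document; each statement's English description precedes it below -/
import Mathlib

section
/- Let A ∈ ℝ, λ > 0, and B = √(λ e^A / 2). Then the function w(x) = 2 ln(e^{A/2} / cosh(Bx)) satisfies w''(x) + λ e^{w(x)} = 0 for all x ∈ ℝ. -/
theorem bratu_gelfand_solution (A lam : ℝ) (hlam : 0 < lam)
    (B : ℝ) (hB : B = Real.sqrt (lam * Real.exp A / 2))
    (w : ℝ → ℝ)
    (hw : ∀ x, w x = 2 * Real.log (Real.exp (A / 2) / Real.cosh (B * x))) :
    ∀ x : ℝ, deriv (deriv w) x + lam * Real.exp (w x) = 0 := by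
  have hcosh : ∀ y : ℝ, (0:ℝ) < Real.cosh y := fun y => Real.cosh_pos (x := y)
  have hwfun : w = fun x => A - 2 * Real.log (Real.cosh (B * x)) := by
    funext x
    rw [hw x, Real.log_div (Real.exp_ne_zero _) (hcosh _).ne', Real.log_exp]
    ring
  have hB2 : B ^ 2 = lam * Real.exp A / 2 := by
    rw [hB, Real.sq_sqrt]
    positivity
  -- first derivative
  have hd1 : ∀ x : ℝ, HasDerivAt w (-2 * B * (Real.sinh (B * x) / Real.cosh (B * x))) x := by
    intro x
    rw [hwfun]
    have hBx : HasDerivAt (fun x : ℝ => B * x) B x := by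
      simpa using (hasDerivAt_id x).const_mul B
    have h2 := ((hBx.cosh.log (hcosh _).ne').const_mul 2).const_sub A
    exact h2.congr_deriv (by ring)
  have hderiv1 : deriv w = fun x => -2 * B * (Real.sinh (B * x) / Real.cosh (B * x)) := by
    funext x; exact (hd1 x).deriv
  intro x
  -- second derivative
  have hBx : HasDerivAt (fun x : ℝ => B * x) B x := by
    simpa using (hasDerivAt_id x).const_mul B
  have hs : HasDerivAt (fun x : ℝ => Real.sinh (B * x)) (Real.cosh (B * x) * B) x := hBx.sinh
  have hc : HasDerivAt (fun x : ℝ => Real.cosh (B * x)) (Real.sinh (B * x) * B) x := hBx.cosh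
  have hd2 : HasDerivAt (deriv w)
      (-2 * B * ((Real.cosh (B * x) * B * Real.cosh (B * x) -
        Real.sinh (B * x) * (Real.sinh (B * x) * B)) / Real.cosh (B * x) ^ 2)) x := by
    rw [hderiv1]
    exact ((hs.div hc (hcosh _).ne')).const_mul (-2 * B)
  have key : Real.cosh (B * x) ^ 2 - Real.sinh (B * x) ^ 2 = 1 := by
    have := Real.cosh_sq_sub_sinh_sq (B * x)
    linarith
  rw [hd2.deriv, hw x]
  have hexp : Real.exp (2 * Real.log (Real.exp (A / 2) / Real.cosh (B * x)))
      = Real.exp A / Real.cosh (B * x) ^ 2 := by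
    rw [show (2:ℝ) * Real.log (Real.exp (A / 2) / Real.cosh (B * x)) =
        Real.log (Real.exp (A / 2) / Real.cosh (B * x)) +
        Real.log (Real.exp (A / 2) / Real.cosh (B * x)) by ring,
      Real.exp_add, Real.exp_log (by positivity), div_mul_div_comm, ← Real.exp_add]
    ring_nf
  rw [hexp]
  have hc0 : Real.cosh (B * x) ≠ 0 := (hcosh _).ne'
  have hnum : Real.cosh (B * x) * B * Real.cosh (B * x) -
      Real.sinh (B * x) * (Real.sinh (B * x) * B) = B := by
    linear_combination B * key
  rw [hnum]
  field_simp
  linear_combination (-2) * hB2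
end

section
/- For λ > λ*, where λ* = sup_{A>0} (2/L²) e^{−A}(arccosh(e^{A/2}))², the equation e^{A/2} = cosh(√(λ e^A/2)·L) has no solution A > 0; i.e., the 1D Bratu problem has no Gelfand-type solution with positive maximum. -/
noncomputable def arcosh (x : ℝ) : ℝ := Real.log (x + Real.sqrt (x ^ 2 - 1))

lemma arcosh_cosh {t : ℝ} (ht : 0 ≤ t) : arcosh (Real.cosh t) = t := by
  unfold arcosh
  have h1 : Real.cosh t ^ 2 - 1 = Real.sinh t ^ 2 := by
    have := Real.cosh_sq_sub_sinh_sq t; linarith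
  rw [h1, Real.sqrt_sq (by simpa using Real.sinh_nonneg_iff.mpr ht),
    Real.cosh_add_sinh, Real.log_exp]

lemma bratu_bdd (L : ℝ) (hL : 0 < L) :
    BddAbove ((fun A => (2 / L ^ 2) * Real.exp (-A) *
      (arcosh (Real.exp (A / 2))) ^ 2) '' Set.Ioi 0) := by
  refine ⟨8 / L ^ 2, ?_⟩
  rintro x ⟨A, hA, rfl⟩
  simp only [Set.mem_Ioi] at hA
  have hlog2 : 0 < Real.log 2 := Real.log_pos (by norm_num)
  have hexp : (1:ℝ) ≤ Real.exp (A / 2) := Real.one_le_exp (by linarith)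
  have hs : Real.sqrt (Real.exp (A/2) ^ 2 - 1) ≤ Real.exp (A/2) := by
    have := Real.sqrt_le_sqrt (show Real.exp (A/2) ^ 2 - 1 ≤ Real.exp (A/2) ^ 2 by linarith)
    rwa [Real.sqrt_sq (Real.exp_pos _).le] at this
  have h1 : 0 ≤ arcosh (Real.exp (A/2)) := by
    unfold arcosh
    apply Real.log_nonneg
    nlinarith [Real.sqrt_nonneg (Real.exp (A/2) ^ 2 - 1)]
  have h2 : arcosh (Real.exp (A/2)) ≤ A/2 + Real.log 2 := by
    unfold arcosh
    calc Real.log (Real.exp (A/2) + Real.sqrt (Real.exp (A/2) ^ 2 - 1))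
        ≤ Real.log (2 * Real.exp (A/2)) := by
          apply Real.log_le_log (by positivity); linarith
      _ = Real.log 2 + A/2 := by
          rw [Real.log_mul (by norm_num) (Real.exp_ne_zero _), Real.log_exp]
      _ = A/2 + Real.log 2 := by ring
  have hnn : 0 ≤ A/2 + Real.log 2 := by linarith
  have hx : A/2 + Real.log 2 ≤ Real.exp (A/2 + Real.log 2) := by
    linarith [Real.add_one_le_exp (A/2 + Real.log 2)]
  have h3 : (A/2 + Real.log 2) ^ 2 ≤ 4 * Real.exp A := by
    calc (A/2 + Real.log 2) ^ 2 ≤ (Real.exp (A/2 + Real.log 2)) ^ 2 := by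
          apply pow_le_pow_left₀ hnn hx
      _ = 4 * Real.exp A := by
          rw [sq, ← Real.exp_add]
          rw [show A/2 + Real.log 2 + (A/2 + Real.log 2) = A + (Real.log 2 + Real.log 2) by ring,
            Real.exp_add, Real.exp_add, Real.exp_log (by norm_num : (0:ℝ) < 2)]
          ring
  have h4 : (arcosh (Real.exp (A/2))) ^ 2 ≤ 4 * Real.exp A := by
    nlinarith
  have he : Real.exp (-A) * Real.exp A = 1 := by
    rw [← Real.exp_add]; simp
  have hL2 : (0:ℝ) < L ^ 2 := by positivity
  have hep : (0:ℝ) < Real.exp (-A) := Real.exp_pos _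
  calc (2 / L ^ 2) * Real.exp (-A) * (arcosh (Real.exp (A/2))) ^ 2
      ≤ (2 / L ^ 2) * Real.exp (-A) * (4 * Real.exp A) := by
        apply mul_le_mul_of_nonneg_left h4 (by positivity)
    _ = 8 / L ^ 2 := by
        field_simp; nlinarith [he]

theorem bratu_no_solution_above_critical (L : ℝ) (hL : 0 < L)
    (lamStar : ℝ)
    (hstar : lamStar = sSup ((fun A => (2 / L ^ 2) * Real.exp (-A) *
      (arcosh (Real.exp (A / 2))) ^ 2) '' Set.Ioi 0)) :
    ∀ lam : ℝ, lamStar < lam →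
      ¬ ∃ A : ℝ, 0 < A ∧
        Real.exp (A / 2) = Real.cosh (Real.sqrt (lam * Real.exp A / 2) * L) := by
  intro lam hlam
  rintro ⟨A, hA, heq⟩
  have hnn : 0 ≤ lam * Real.exp A / 2 := by
    by_contra h
    push_neg at h
    rw [Real.sqrt_eq_zero'.mpr (by linarith), zero_mul, Real.cosh_zero] at heq
    have : A / 2 = 0 := by
      have : Real.exp (A/2) = Real.exp 0 := by rw [heq, Real.exp_zero]
      exact Real.exp_injective this
    linarith
  set y := Real.sqrt (lam * Real.exp A / 2) * L with hy
  have hy0 : 0 ≤ y := mul_nonneg (Real.sqrt_nonneg _) hL.le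
  have harc : arcosh (Real.exp (A/2)) = y := by
    rw [heq, arcosh_cosh hy0]
  have hy2 : y ^ 2 = lam * Real.exp A / 2 * L ^ 2 := by
    rw [hy, mul_pow, Real.sq_sqrt hnn]
  have hval : (2 / L ^ 2) * Real.exp (-A) * (arcosh (Real.exp (A/2))) ^ 2 = lam := by
    rw [harc, hy2, Real.exp_neg]
    field_simp
  have hmem : lam ∈ ((fun A => (2 / L ^ 2) * Real.exp (-A) *
      (arcosh (Real.exp (A / 2))) ^ 2) '' Set.Ioi 0) := ⟨A, hA, hval⟩
  have := le_csSup (bratu_bdd L hL) hmem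
  rw [← hstar] at this
  linarith
end
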